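/- Let λ₀ ∈ (0,2) and define v₀(ξ) = e^{λ₀ξ}(1 − e^{2ξ})^{(1−λ₀)/2} for ξ < 0 (and 0 for ξ ≥ 0). Then v₀ ∈ L²(ℝ), and the function v(ξ,t) = e^{λ₀ t} v₀(ξ) solves v_t = (1−φ²)v_ξ + φφ' v (distributionally, φ(x)=e^{-|x|}) with ‖v(·,t)‖_{L²} = e^{λ₀ t}‖v₀‖_{L²}. Hence for every C > 0 there exists t > 0 with ‖v(·,t)‖_{L²} > C‖v₀‖_{L²}. -/

import Mathlib

open MeasureTheory Real Set Filter Topology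

lemma integrableOn_comp_neg' {f : ℝ → ℝ} {s : Set ℝ}
    (h : IntegrableOn f s (volume : Measure ℝ)) :
    IntegrableOn (fun x => f (-x)) (-s) (volume : Measure ℝ) := by
  have := ((Measure.measurePreserving_neg (volume : Measure ℝ)).integrableOn_comp_preimage
    (Homeomorph.neg ℝ).measurableEmbedding (f := f) (s := s)).mpr h
  simpa [Function.comp_def, Set.neg_preimage] using this

lemma integrableOn_exp_Iio (a c : ℝ) (ha : 0 < a) :
    IntegrableOn (fun ξ : ℝ => Real.exp (a * ξ)) (Iio c) (volume : Measure ℝ) := by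
  have h := exp_neg_integrableOn_Ioi (-c) ha
  have h2 := integrableOn_comp_neg' h
  simpa [Set.neg_Ioi] using h2

lemma integrableOn_negrpow (b : ℝ) (hb : -1 < b) :
    IntegrableOn (fun ξ : ℝ => (-ξ) ^ b) (Ico (-1) 0) (volume : Measure ℝ) := by
  have h : IntegrableOn (fun x : ℝ => x ^ b) (Ioc 0 1) (volume : Measure ℝ) := by
    rw [← intervalIntegrable_iff_integrableOn_Ioc_of_le (by norm_num)]
    exact intervalIntegral.intervalIntegrable_rpow' hb
  have h2 := integrableOn_comp_neg' h
  simpa [Set.neg_Ioc] using h2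

lemma meas_aux (a b : ℝ) :
    Measurable fun ξ : ℝ => Real.exp (a * ξ) * (1 - Real.exp (2 * ξ)) ^ b := by
  fun_prop

lemma key_integrableOn {a b : ℝ} (ha : 0 < a) (hb : -1 < b) :
    IntegrableOn (fun ξ : ℝ => Real.exp (a * ξ) * (1 - Real.exp (2 * ξ)) ^ b) (Iio 0)
      (volume : Measure ℝ) := by
  have hmeas := meas_aux a b
  rw [← Set.Iio_union_Ico_eq_Iio (show (-1:ℝ) ≤ 0 by norm_num)]
  refine IntegrableOn.union ?_ ?_
  · -- far field
    set M : ℝ := max 1 ((1 - Real.exp (-2)) ^ b) with hM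
    refine Integrable.mono' (((integrableOn_exp_Iio a (-1) ha)).const_mul M)
      hmeas.aestronglyMeasurable.restrict ?_
    rw [ae_restrict_iff' measurableSet_Iio]
    refine ae_of_all _ fun x hx => ?_
    have hx1 : x < -1 := hx
    have he2 : Real.exp (2 * x) < Real.exp (-2) := by
      apply Real.exp_lt_exp.mpr; linarith
    have hu0 : (0:ℝ) < 1 - Real.exp (2 * x) := by
      have : Real.exp (-2) < 1 := Real.exp_lt_one_iff.mpr (by norm_num)
      linarith
    have hu1 : 1 - Real.exp (2 * x) ≤ 1 := by
      have := Real.exp_pos (2 * x); linarith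
    have hub : (1 - Real.exp (2 * x)) ^ b ≤ M := by
      rcases le_or_gt 0 b with hb0 | hb0
      · exact le_trans (Real.rpow_le_one hu0.le hu1 hb0) (le_max_left _ _)
      · refine le_trans ?_ (le_max_right _ _)
        refine Real.rpow_le_rpow_of_nonpos ?_ (by linarith) hb0.le
        have := Real.exp_lt_one_iff.mpr (show (-2:ℝ) < 0 by norm_num)
        linarith
    have hnorm : ‖Real.exp (a * x) * (1 - Real.exp (2 * x)) ^ b‖
        = Real.exp (a * x) * (1 - Real.exp (2 * x)) ^ b := by
      rw [Real.norm_eq_abs, abs_of_nonneg]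
      positivity
    rw [hnorm]
    calc Real.exp (a * x) * (1 - Real.exp (2 * x)) ^ b
        ≤ Real.exp (a * x) * M := by
          exact mul_le_mul_of_nonneg_left hub (Real.exp_pos _).le
      _ = M * Real.exp (a * x) := by ring
  · -- near 0
    set K : ℝ := max ((2:ℝ) ^ b) ((2 * Real.exp (-2)) ^ b) with hK
    refine Integrable.mono' ((integrableOn_negrpow b hb).const_mul K)
      hmeas.aestronglyMeasurable.restrict ?_
    rw [ae_restrict_iff' measurableSet_Ico]
    refine ae_of_all _ fun x hx => ?_
    obtain ⟨hx1, hx0⟩ := hx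
    have hxneg : 0 < -x := by linarith
    have hu0 : (0:ℝ) < 1 - Real.exp (2 * x) := by
      have : Real.exp (2 * x) < 1 := Real.exp_lt_one_iff.mpr (by linarith)
      linarith
    -- lower bound: 1 - e^{2x} ≥ (-2x) e^{2x} ≥ (-2x) e^{-2}
    have hlow : (-(2*x)) * Real.exp (-2) ≤ 1 - Real.exp (2 * x) := by
      have h1 : (-(2*x)) + 1 ≤ Real.exp (-(2*x)) := Real.add_one_le_exp _
      have h2 : Real.exp (-(2*x)) * Real.exp (2*x) = 1 := by
        rw [← Real.exp_add]; simp
      have h3 : Real.exp (-2) ≤ Real.exp (2*x) := Real.exp_le_exp.mpr (by linarith)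
      nlinarith [Real.exp_pos (2*x), Real.exp_pos (-2)]
    -- upper bound: 1 - e^{2x} ≤ -2x
    have hhigh : 1 - Real.exp (2 * x) ≤ -(2*x) := by
      have := Real.add_one_le_exp (2*x); linarith
    have hub : (1 - Real.exp (2 * x)) ^ b ≤ K * (-x) ^ b := by
      rcases le_or_gt 0 b with hb0 | hb0
      · calc (1 - Real.exp (2 * x)) ^ b ≤ (-(2*x)) ^ b :=
              Real.rpow_le_rpow hu0.le hhigh hb0
          _ = 2 ^ b * (-x) ^ b := by
              rw [show -(2*x) = 2 * (-x) by ring, Real.mul_rpow (by norm_num) hxneg.le]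
          _ ≤ K * (-x) ^ b := by
              have : (0:ℝ) ≤ (-x) ^ b := Real.rpow_nonneg hxneg.le b
              exact mul_le_mul_of_nonneg_right (le_max_left _ _) this
      · calc (1 - Real.exp (2 * x)) ^ b ≤ ((-(2*x)) * Real.exp (-2)) ^ b := by
              refine Real.rpow_le_rpow_of_nonpos (mul_pos (by linarith) (Real.exp_pos _)) hlow hb0.le
          _ = (2 * Real.exp (-2)) ^ b * (-x) ^ b := by
              rw [show -(2*x) * Real.exp (-2) = (2 * Real.exp (-2)) * (-x) by ring,
                Real.mul_rpow (by positivity) hxneg.le]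
          _ ≤ K * (-x) ^ b := by
              have : (0:ℝ) ≤ (-x) ^ b := Real.rpow_nonneg hxneg.le b
              exact mul_le_mul_of_nonneg_right (le_max_right _ _) this
    have hnorm : ‖Real.exp (a * x) * (1 - Real.exp (2 * x)) ^ b‖
        = Real.exp (a * x) * (1 - Real.exp (2 * x)) ^ b := by
      rw [Real.norm_eq_abs, abs_of_nonneg]; positivity
    rw [hnorm]
    have hexp1 : Real.exp (a * x) ≤ 1 := Real.exp_le_one_iff.mpr (by nlinarith)
    calc Real.exp (a * x) * (1 - Real.exp (2 * x)) ^ b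
        ≤ 1 * (K * (-x) ^ b) := by
          refine mul_le_mul hexp1 hub (Real.rpow_nonneg hu0.le b) zero_le_one
      _ = K * (-x) ^ b := by ring

/-- `φ(x) = e^{-|x|}`. -/
noncomputable def phi (x : ℝ) : ℝ := Real.exp (-|x|)

/-- `φ'(x) = -sgn(x) e^{-|x|}` (a.e. derivative). -/
noncomputable def phi' (x : ℝ) : ℝ := -Real.sign x * Real.exp (-|x|)

/-- The eigenfunction `v₀(ξ) = e^{λ₀ξ}(1-e^{2ξ})^{(1-λ₀)/2}` for `ξ < 0`, `0` for `ξ ≥ 0`. -/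
noncomputable def eigfun (lam0 : ℝ) (ξ : ℝ) : ℝ :=
  if ξ < 0 then Real.exp (lam0 * ξ) * (1 - Real.exp (2 * ξ)) ^ ((1 - lam0) / 2) else 0

lemma u_pos {ξ : ℝ} (hξ : ξ < 0) : 0 < 1 - Real.exp (2 * ξ) := by
  have : Real.exp (2 * ξ) < 1 := Real.exp_lt_one_iff.mpr (by linarith)
  linarith

lemma eigfun_measurable (lam0 : ℝ) : Measurable (eigfun lam0) := by
  unfold eigfun
  apply Measurable.ite (measurableSet_Iio (a := (0:ℝ))) _ measurable_const
  fun_prop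

lemma eigfun_eq_indicator (lam0 : ℝ) :
    eigfun lam0 = Set.indicator (Iio 0)
      (fun ξ => Real.exp (lam0 * ξ) * (1 - Real.exp (2 * ξ)) ^ ((1 - lam0) / 2)) := by
  funext ξ
  simp only [eigfun, Set.indicator_apply, mem_Iio]

lemma eigfun_integrable {lam0 : ℝ} (h0 : 0 < lam0) (h2 : lam0 < 2) :
    Integrable (eigfun lam0) (volume : Measure ℝ) := by
  rw [eigfun_eq_indicator, integrable_indicator_iff measurableSet_Iio]
  exact key_integrableOn h0 (by linarith)

lemma eigfun_sq_integrable {lam0 : ℝ} (h0 : 0 < lam0) (h2 : lam0 < 2) :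
    Integrable (fun x => eigfun lam0 x ^ 2) (volume : Measure ℝ) := by
  have heq : (fun x => eigfun lam0 x ^ 2) = Set.indicator (Iio 0)
      (fun x => eigfun lam0 x ^ 2) := by
    funext x
    rw [Set.indicator_apply]
    by_cases hx : x ∈ Iio (0:ℝ)
    · rw [if_pos hx]
    · rw [if_neg hx]
      simp only [eigfun, if_neg (show ¬ x < 0 by simpa [mem_Iio] using hx)]
      norm_num
  rw [heq, integrable_indicator_iff measurableSet_Iio]
  refine (key_integrableOn (a := 2 * lam0) (b := 1 - lam0) (by linarith) (by linarith)).congr_fun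
    ?_ measurableSet_Iio
  intro ξ hξ
  have hu := u_pos hξ
  have e1 : Real.exp (lam0 * ξ) ^ 2 = Real.exp (2 * lam0 * ξ) := by
    rw [sq, ← Real.exp_add]; ring_nf
  have e2 : ((1 - Real.exp (2 * ξ)) ^ ((1 - lam0) / 2)) ^ 2
      = (1 - Real.exp (2 * ξ)) ^ (1 - lam0) := by
    rw [sq, ← Real.rpow_add hu]; ring_nf
  have hξ' : ξ < 0 := hξ
  simp only [eigfun, if_pos hξ']
  rw [mul_pow, e1, e2]

lemma eigfun_memLp {lam0 : ℝ} (h0 : 0 < lam0) (h2 : lam0 < 2) :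
    MeasureTheory.MemLp (eigfun lam0) 2 (volume : Measure ℝ) :=
  (memLp_two_iff_integrable_sq (eigfun_measurable lam0).aestronglyMeasurable).mpr
    (eigfun_sq_integrable h0 h2)

lemma eigfun_sq_int_pos {lam0 : ℝ} (h0 : 0 < lam0) (h2 : lam0 < 2) :
    0 < ∫ x : ℝ, eigfun lam0 x ^ 2 := by
  rw [integral_pos_iff_support_of_nonneg (fun x => sq_nonneg _) (eigfun_sq_integrable h0 h2)]
  have hsub : Iio (0:ℝ) ⊆ Function.support fun x => eigfun lam0 x ^ 2 := by
    intro x hx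
    have hx' : x < 0 := hx
    have hu := u_pos hx'
    simp only [Function.mem_support]
    simp only [eigfun, if_pos hx']
    have h1 : 0 < Real.exp (lam0 * x) * (1 - Real.exp (2 * x)) ^ ((1 - lam0) / 2) :=
      mul_pos (Real.exp_pos _) (Real.rpow_pos_of_pos hu _)
    positivity
  calc (0:ENNReal) < volume (Iio (0:ℝ)) := by rw [Real.volume_Iio]; norm_num
    _ ≤ _ := measure_mono hsub

lemma measurable_phi : Measurable phi := by unfold phi; fun_prop

lemma measurable_sign' : Measurable Real.sign := by
  have h : Real.sign = fun r : ℝ => if r < 0 then (-1:ℝ) else if 0 < r then 1 else 0 :=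
    funext fun r => by rw [Real.sign]
  rw [h]
  refine Measurable.ite ?_ measurable_const
    (Measurable.ite ?_ measurable_const measurable_const)
  · exact measurableSet_Iio
  · exact measurableSet_Ioi

lemma measurable_phi' : Measurable phi' := by
  unfold phi'
  exact (measurable_sign'.neg).mul (by fun_prop)

lemma abs_phi_le (x : ℝ) : |phi x| ≤ 1 := by
  rw [phi, abs_of_pos (Real.exp_pos _)]
  exact Real.exp_le_one_iff.mpr (neg_nonpos.mpr (abs_nonneg x))

lemma abs_phi'_le (x : ℝ) : |phi' x| ≤ 1 := by
  rw [phi', abs_mul, abs_neg]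
  have h1 : |Real.sign x| ≤ 1 := by
    rcases Real.sign_apply_eq x with h | h | h <;> rw [h] <;> norm_num
  have h2 : |Real.exp (-|x|)| ≤ 1 := by
    rw [abs_of_pos (Real.exp_pos _)]
    exact Real.exp_le_one_iff.mpr (neg_nonpos.mpr (abs_nonneg x))
  calc |Real.sign x| * |Real.exp (-|x|)| ≤ 1 * 1 :=
        mul_le_mul h1 h2 (abs_nonneg _) zero_le_one
    _ = 1 := by norm_num

lemma hasDerivAt_F {lam0 : ℝ} (ψ : ℝ → ℝ) (hψ : ContDiff ℝ (⊤ : ℕ∞) ψ) {x : ℝ} (hx : x < 0) :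
    HasDerivAt (fun y => Real.exp (lam0 * y) * (1 - Real.exp (2 * y)) ^ ((3 - lam0) / 2) * ψ y)
      (lam0 * eigfun lam0 x * ψ x
        + eigfun lam0 x * (-2 * phi x * phi' x * ψ x + (1 - phi x ^ 2) * deriv ψ x)
        - phi x * phi' x * eigfun lam0 x * ψ x) x := by
  have hu := u_pos hx
  have habs : |x| = -x := abs_of_neg hx
  have hψd : HasDerivAt ψ (deriv ψ x) x := (hψ.differentiable (by simp) x).hasDerivAt
  have h1 : HasDerivAt (fun y : ℝ => Real.exp (lam0 * y)) (Real.exp (lam0 * x) * lam0) x := by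
    simpa using ((hasDerivAt_id x).const_mul lam0).exp
  have h2i : HasDerivAt (fun y : ℝ => 1 - Real.exp (2 * y)) (-(Real.exp (2 * x) * 2)) x := by
    simpa using (((hasDerivAt_id x).const_mul 2).exp).const_sub 1
  have h2 : HasDerivAt (fun y : ℝ => (1 - Real.exp (2 * y)) ^ ((3 - lam0) / 2))
      ((-(Real.exp (2 * x) * 2)) * ((3 - lam0) / 2)
        * (1 - Real.exp (2 * x)) ^ ((3 - lam0) / 2 - 1)) x :=
    h2i.rpow_const (Or.inl hu.ne')
  have h123 : HasDerivAt (fun y => Real.exp (lam0 * y) * (1 - Real.exp (2 * y)) ^ ((3 - lam0) / 2) * ψ y) _ x :=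
    (h1.mul h2).mul hψd
  convert h123 using 1
  -- now prove the value identity
  have hphix : phi x = Real.exp x := by rw [phi, habs, neg_neg]
  have hphix' : phi' x = Real.exp x := by
    rw [phi', habs, Real.sign_of_neg hx]; ring_nf
  have hE : Real.exp (2 * x) = Real.exp x ^ 2 := by
    rw [sq, ← Real.exp_add]; ring_nf
  have hq2 : (1 - Real.exp (2 * x)) ^ ((3 - lam0) / 2 - 1)
      = (1 - Real.exp (2 * x)) ^ ((1 - lam0) / 2) := by
    congr 1; ring
  have hq1 : (1 - Real.exp (2 * x)) ^ ((3 - lam0) / 2)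
      = (1 - Real.exp (2 * x)) ^ ((1 - lam0) / 2) * (1 - Real.exp (2 * x)) := by
    rw [show (3 - lam0) / 2 = (1 - lam0) / 2 + 1 by ring, Real.rpow_add hu, Real.rpow_one]
  simp only [eigfun, if_pos hx, hphix, hphix', Pi.mul_apply]
  rw [hq1, hq2]
  simp only [hE]
  ring_nf

lemma part2 {lam0 : ℝ} (h0 : 0 < lam0) (h2 : lam0 < 2) (ψ : ℝ → ℝ)
    (hψ : ContDiff ℝ (⊤ : ℕ∞) ψ) (hψc : HasCompactSupport ψ) :
    (∫ x : ℝ, lam0 * eigfun lam0 x * ψ x)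
      = -(∫ x : ℝ, eigfun lam0 x *
            (-2 * phi x * phi' x * ψ x + (1 - phi x ^ 2) * deriv ψ x))
        + ∫ x : ℝ, phi x * phi' x * eigfun lam0 x * ψ x := by
  obtain ⟨Cψ, hCψ⟩ := hψc.exists_bound_of_continuous hψ.continuous
  have hψ'c : Continuous (deriv ψ) := hψ.continuous_deriv (by simp)
  obtain ⟨Cψ', hCψ'⟩ := (hψc.deriv).exists_bound_of_continuous hψ'c
  have hw : Integrable (eigfun lam0) (volume : Measure ℝ) := eigfun_integrable h0 h2
  set G1 : ℝ → ℝ := fun x => lam0 * eigfun lam0 x * ψ x with hG1def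
  set G2 : ℝ → ℝ := fun x =>
    eigfun lam0 x * (-2 * phi x * phi' x * ψ x + (1 - phi x ^ 2) * deriv ψ x) with hG2def
  set G3 : ℝ → ℝ := fun x => phi x * phi' x * eigfun lam0 x * ψ x with hG3def
  -- integrability of the three pieces
  have hG1 : Integrable G1 (volume : Measure ℝ) := by
    have h := hw.bdd_mul (f := fun x => lam0 * ψ x)
      (continuous_const.mul hψ.continuous).aestronglyMeasurable (c := |lam0| * Cψ) (ae_of_all _ ?_)
    · exact h.congr (ae_of_all _ fun x => by simp only [hG1def]; ring)
    · intro x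
      rw [norm_mul]
      exact mul_le_mul_of_nonneg_left (hCψ x) (abs_nonneg _)
  have hG2 : Integrable G2 (volume : Measure ℝ) := by
    have h := hw.bdd_mul
      (f := fun x => -2 * phi x * phi' x * ψ x + (1 - phi x ^ 2) * deriv ψ x) ?_
      (c := 2 * Cψ + Cψ') (ae_of_all _ ?_)
    · exact h.congr (ae_of_all _ fun x => by simp only [hG2def]; ring)
    · exact ((((measurable_const.mul measurable_phi).mul measurable_phi').mul
        hψ.continuous.measurable).add
        ((measurable_const.sub (measurable_phi.pow measurable_const)).mul
          hψ'c.measurable)).aestronglyMeasurable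
    · intro x
      have hb1 : ‖-2 * phi x * phi' x * ψ x‖ ≤ 2 * Cψ := by
        rw [Real.norm_eq_abs, abs_mul, abs_mul, abs_mul, abs_neg]
        have : |(2:ℝ)| = 2 := by norm_num
        rw [this]
        have hψx : |ψ x| ≤ Cψ := by simpa [Real.norm_eq_abs] using hCψ x
        calc 2 * |phi x| * |phi' x| * |ψ x| ≤ 2 * 1 * 1 * Cψ := by
              gcongr
              · exact abs_phi_le x
              · exact abs_phi'_le x
          _ = 2 * Cψ := by ring
      have hb2 : ‖(1 - phi x ^ 2) * deriv ψ x‖ ≤ Cψ' := by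
        rw [Real.norm_eq_abs, abs_mul]
        have hp : 0 < phi x := Real.exp_pos _
        have hp1 : phi x ≤ 1 := by
          have := abs_phi_le x; rw [abs_of_pos hp] at this; exact this
        have h1 : |1 - phi x ^ 2| ≤ 1 := by
          rw [abs_le]; constructor <;> nlinarith
        have hψx : |deriv ψ x| ≤ Cψ' := by simpa [Real.norm_eq_abs] using hCψ' x
        calc |1 - phi x ^ 2| * |deriv ψ x| ≤ 1 * Cψ' :=
              mul_le_mul h1 hψx (abs_nonneg _) zero_le_one
          _ = Cψ' := by ring
      calc ‖-2 * phi x * phi' x * ψ x + (1 - phi x ^ 2) * deriv ψ x‖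
          ≤ ‖-2 * phi x * phi' x * ψ x‖ + ‖(1 - phi x ^ 2) * deriv ψ x‖ := norm_add_le _ _
        _ ≤ 2 * Cψ + Cψ' := add_le_add hb1 hb2
  have hG3 : Integrable G3 (volume : Measure ℝ) := by
    have h := hw.bdd_mul
      (f := fun x => phi x * phi' x * ψ x)
      (((measurable_phi.mul measurable_phi').mul
        hψ.continuous.measurable).aestronglyMeasurable) (c := Cψ) (ae_of_all _ ?_)
    · exact h.congr (ae_of_all _ fun x => by simp only [hG3def]; ring)
    · intro x
      rw [Real.norm_eq_abs, abs_mul, abs_mul]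
      have hψx : |ψ x| ≤ Cψ := by simpa [Real.norm_eq_abs] using hCψ x
      have hC0 : 0 ≤ Cψ := le_trans (abs_nonneg _) hψx
      calc |phi x| * |phi' x| * |ψ x| ≤ 1 * 1 * Cψ := by
            gcongr
            · exact abs_phi_le x
            · exact abs_phi'_le x
        _ = Cψ := by ring
  -- the combined function and FTC
  set G : ℝ → ℝ := fun x => G1 x + G2 x - G3 x with hGdef
  have hGint : Integrable G (volume : Measure ℝ) := (hG1.add hG2).sub hG3
  set F : ℝ → ℝ :=
    fun y => Real.exp (lam0 * y) * (1 - Real.exp (2 * y)) ^ ((3 - lam0) / 2) * ψ y with hFdef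
  have hderiv : ∀ x ∈ Iio (0:ℝ), HasDerivAt F (G x) x := fun x hx =>
    hasDerivAt_F ψ hψ hx
  have hFcont : Continuous F := by
    have hrq : Continuous fun y : ℝ => y ^ ((3 - lam0) / 2) :=
      continuous_iff_continuousAt.mpr fun y =>
        Real.continuousAt_rpow_const y _ (Or.inr (by linarith))
    exact ((Real.continuous_exp.comp (continuous_const.mul continuous_id)).mul
      (hrq.comp (continuous_const.sub
        (Real.continuous_exp.comp (continuous_const.mul continuous_id))))).mul hψ.continuous
  have htend : Tendsto F atBot (𝓝 (0:ℝ)) := by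
    obtain ⟨R, hR⟩ := hψc.isCompact.isBounded.subset_closedBall 0
    have hev : (fun _ : ℝ => (0:ℝ)) =ᶠ[atBot] F := by
      rw [Filter.EventuallyEq, eventually_atBot]
      refine ⟨-(|R| + 1), fun x hx => ?_⟩
      have hψ0 : ψ x = 0 := by
        apply image_eq_zero_of_notMem_tsupport
        intro hmem
        have h1 := hR hmem
        rw [Metric.mem_closedBall, Real.dist_eq, sub_zero] at h1
        have h2 : -|R| ≤ x := by
          have := abs_le.mp (le_trans h1 (le_abs_self R))
          exact this.1
        linarith
      simp [hFdef, hψ0]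
    exact Tendsto.congr' hev tendsto_const_nhds
  have hIic : ∫ x in Iic (0:ℝ), G x = F 0 - 0 :=
    integral_Iic_of_hasDerivAt_of_tendsto hFcont.continuousWithinAt hderiv
      hGint.integrableOn htend
  have hF0 : F 0 = 0 := by
    have hq0 : (3 - lam0) / 2 ≠ 0 := by
      have h3 : (0:ℝ) < (3 - lam0) / 2 := by linarith
      exact h3.ne'
    simp [hFdef, Real.zero_rpow hq0]
  have hG0 : ∀ x : ℝ, ¬ x < 0 → G x = 0 := by
    intro x hx
    simp [hGdef, hG1def, hG2def, hG3def, eigfun, if_neg hx]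
  have hGzero : ∫ x : ℝ, G x = 0 := by
    have h1 : ∫ x in Iic (0:ℝ), G x = ∫ x : ℝ, G x := by
      rw [← integral_indicator measurableSet_Iic]
      congr 1
      funext x
      rw [Set.indicator_apply]
      by_cases hx : x ∈ Iic (0:ℝ)
      · rw [if_pos hx]
      · rw [if_neg hx, hG0 x (by simp only [mem_Iic, not_le] at hx; linarith)]
    rw [← h1, hIic, hF0, sub_zero]
  have hsplit : ∫ x : ℝ, G x = (∫ x : ℝ, G1 x) + (∫ x : ℝ, G2 x) - ∫ x : ℝ, G3 x := by
    have hadd : Integrable (fun x => G1 x + G2 x) (volume : Measure ℝ) := hG1.add hG2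
    simp only [hGdef]
    rw [integral_sub hadd hG3, integral_add hG1 hG2]
  have := hsplit.symm.trans hGzero
  linarith

/-- For `λ₀ ∈ (0,2)`: `v₀ ∈ L²(ℝ)`, the function `v(ξ,t) = e^{λ₀t}v₀(ξ)` solves
`v_t = (1-φ²)v_ξ + φφ'v` distributionally, its `L²` norm equals `e^{λ₀t}‖v₀‖`, and hence
grows past any multiple `C‖v₀‖`. -/
theorem exponential_growth_instability
    (lam0 : ℝ) (h0 : 0 < lam0) (h2 : lam0 < 2) :
    MeasureTheory.MemLp (eigfun lam0) 2 (volume : Measure ℝ)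
    ∧ (∀ t : ℝ, ∀ ψ : ℝ → ℝ, ContDiff ℝ (⊤ : ℕ∞) ψ → HasCompactSupport ψ →
        (∫ x : ℝ, lam0 * Real.exp (lam0 * t) * eigfun lam0 x * ψ x)
          = -(∫ x : ℝ, Real.exp (lam0 * t) * eigfun lam0 x *
                (-2 * phi x * phi' x * ψ x + (1 - phi x ^ 2) * deriv ψ x))
            + ∫ x : ℝ, phi x * phi' x * Real.exp (lam0 * t) * eigfun lam0 x * ψ x)
    ∧ (∀ t : ℝ,
        Real.sqrt (∫ x : ℝ, (Real.exp (lam0 * t) * eigfun lam0 x) ^ 2)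
          = Real.exp (lam0 * t) * Real.sqrt (∫ x : ℝ, (eigfun lam0 x) ^ 2))
    ∧ (∀ C : ℝ, 0 < C → ∃ t : ℝ, 0 < t ∧
        Real.sqrt (∫ x : ℝ, (Real.exp (lam0 * t) * eigfun lam0 x) ^ 2)
          > C * Real.sqrt (∫ x : ℝ, (eigfun lam0 x) ^ 2)) := by
  have hpart3 : ∀ t : ℝ,
      Real.sqrt (∫ x : ℝ, (Real.exp (lam0 * t) * eigfun lam0 x) ^ 2)
        = Real.exp (lam0 * t) * Real.sqrt (∫ x : ℝ, (eigfun lam0 x) ^ 2) := by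
    intro t
    have hrw : (fun x : ℝ => (Real.exp (lam0 * t) * eigfun lam0 x) ^ 2)
        = fun x => Real.exp (lam0 * t) ^ 2 * eigfun lam0 x ^ 2 := by
      funext x; ring
    rw [hrw, integral_const_mul, Real.sqrt_mul (sq_nonneg _),
      Real.sqrt_sq (Real.exp_pos _).le]
  refine ⟨eigfun_memLp h0 h2, ?_, hpart3, ?_⟩
  · intro t ψ hψ hψc
    have key := part2 h0 h2 ψ hψ hψc
    set c : ℝ := Real.exp (lam0 * t) with hc
    have r1 : (fun x : ℝ => lam0 * c * eigfun lam0 x * ψ x)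
        = fun x => c * (lam0 * eigfun lam0 x * ψ x) := by funext x; ring
    have r2 : (fun x : ℝ => c * eigfun lam0 x *
          (-2 * phi x * phi' x * ψ x + (1 - phi x ^ 2) * deriv ψ x))
        = fun x => c * (eigfun lam0 x *
          (-2 * phi x * phi' x * ψ x + (1 - phi x ^ 2) * deriv ψ x)) := by funext x; ring
    have r3 : (fun x : ℝ => phi x * phi' x * c * eigfun lam0 x * ψ x)
        = fun x => c * (phi x * phi' x * eigfun lam0 x * ψ x) := by funext x; ring
    rw [r1, r2, r3, integral_const_mul, integral_const_mul, integral_const_mul, key]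
    ring
  · intro C hC
    have hmax : (0:ℝ) ≤ max 0 (Real.log C) := le_max_left _ _
    refine ⟨(max 0 (Real.log C) + 1) / lam0, by positivity, ?_⟩
    have ht : lam0 * ((max 0 (Real.log C) + 1) / lam0) = max 0 (Real.log C) + 1 := by
      field_simp
    have hCexp : C < Real.exp (lam0 * ((max 0 (Real.log C) + 1) / lam0)) := by
      rw [ht]
      calc C = Real.exp (Real.log C) := (Real.exp_log hC).symm
        _ < Real.exp (max 0 (Real.log C) + 1) := Real.exp_lt_exp.mpr (by
            have := le_max_right 0 (Real.log C); linarith)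
    have hS : 0 < Real.sqrt (∫ x : ℝ, eigfun lam0 x ^ 2) :=
      Real.sqrt_pos.mpr (eigfun_sq_int_pos h0 h2)
    rw [hpart3]
    exact mul_lt_mul_of_pos_right hCexp hS
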